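/- arXiv:2511.22487 — 4 statements merged into one kernel-verified Lean document; each statement's English description precedes it below -/
import Mathlib

section
/- If A and B are positive semidefinite matrices, then AB and BA have the same range if and only if A commutes with the projection onto the support of B and B commutes with the projection onto the support of A. -/
open scoped ComplexOrder

/-- The range (support) of a matrix, i.e. the orthogonal complement of its kernel. -/
noncomputable def msupp {n : Type*} [Fintype n] [DecidableEq n] (X : Matrix n n ℂ) :
    Submodule ℂ (EuclideanSpace ℂ n) :=
  (LinearMap.ker (Matrix.toEuclideanLin X))ᗮ

/-!
Write `a, b` for the operators of `A, B` and `p, q` for their support projections, so that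
`ker p = ker a` and `ker q = ker b`. If `ker (a b) = ker (b a)`, then `a` maps `ker b = ker q`
into itself; a symmetric operator leaving the kernel of a symmetric projection invariant also
leaves its orthogonal complement, the range, invariant, and hence commutes with the projection.
The same argument gives `b p = p b`. Conversely, if `a q = q a` and `b p = p b`, then `q`
preserves `ker a = ker p`, so `p` and `q` commute as well, and
`ker (a b) = ker (p b) = ker (b p) = ker (q p) = ker (p q) = ker (q a) = ker (b a)`.
-/

open LinearMap Module.End Submodule

namespace Submodule

variable {𝕜 E : Type*} [RCLike 𝕜] [NormedAddCommGroup E] [InnerProductSpace 𝕜 E]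

theorem orthogonal_inj {K₀ K₁ : Submodule 𝕜 E} [K₀.HasOrthogonalProjection]
    [K₁.HasOrthogonalProjection] : K₀ᗮ = K₁ᗮ ↔ K₀ = K₁ := by
  simp only [le_antisymm_iff, orthogonal_le_orthogonal_iff, and_comm]

end Submodule

namespace LinearMap

section Semiring

variable {R M : Type*} [Semiring R] [AddCommMonoid M] [Module R M]

theorem ker_mem_invtSubmodule_of_ker_mul_eq {a b : Module.End R M}
    (h : ker (a * b) = ker (b * a)) : ker b ∈ invtSubmodule a := fun x hx =>
  show x ∈ ker (b * a) from h ▸ show a (b x) = 0 by rw [mem_ker.mp hx, map_zero]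

theorem ker_mul_eq_ker_mul_of_commute {a b p q : Module.End R M} (hpa : ker p = ker a)
    (hqb : ker q = ker b) (hbp : Commute b p) : ker (a * b) = ker (q * p) := by
  rw [mul_eq_comp, ker_comp, ← hpa, ← ker_comp, ← mul_eq_comp, ← hbp.eq, mul_eq_comp, ker_comp,
    ← hqb, mul_eq_comp, ker_comp]

end Semiring

variable {𝕜 E : Type*} [RCLike 𝕜] [NormedAddCommGroup E] [InnerProductSpace 𝕜 E]

theorem IsSymmetricProjection.range_eq_orthogonal_ker {q : E →ₗ[𝕜] E}
    (hq : q.IsSymmetricProjection) : range q = (ker q)ᗮ := by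
  have := hq.hasOrthogonalProjection_range
  rw [← hq.isSymmetric.orthogonal_range, orthogonal_orthogonal]

theorem IsSymmetricProjection.ker_eq_of_range_eq {p : E →ₗ[𝕜] E} (hp : p.IsSymmetricProjection)
    {K : Submodule 𝕜 E} [K.HasOrthogonalProjection] (h : range p = Kᗮ) : ker p = K := by
  rw [← hp.isSymmetric.orthogonal_range, h, orthogonal_orthogonal]

theorem IsSymmetricProjection.commute_of_ker_mem_invtSubmodule {a q : E →ₗ[𝕜] E}
    (hq : q.IsSymmetricProjection) (ha : a.IsSymmetric) (h : ker q ∈ invtSubmodule a) :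
    Commute a q :=
  (hq.isIdempotentElem.commute_iff.mpr
    ⟨hq.range_eq_orthogonal_ker ▸ ha.orthogonalComplement_mem_invtSubmodule h, h⟩).symm

theorem ker_mul_eq_ker_mul_iff_commute {a b p q : E →ₗ[𝕜] E} (ha : a.IsSymmetric)
    (hb : b.IsSymmetric) (hp : p.IsSymmetricProjection) (hq : q.IsSymmetricProjection)
    (hpa : ker p = ker a) (hqb : ker q = ker b) :
    ker (a * b) = ker (b * a) ↔ Commute a q ∧ Commute b p := by
  refine ⟨fun h => ⟨?_, ?_⟩, fun ⟨haq, hbp⟩ => ?_⟩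
  · exact hq.commute_of_ker_mem_invtSubmodule ha (hqb ▸ ker_mem_invtSubmodule_of_ker_mul_eq h)
  · exact hp.commute_of_ker_mem_invtSubmodule hb
      (hpa ▸ ker_mem_invtSubmodule_of_ker_mul_eq h.symm)
  · have hq_ker_a : ker a ∈ invtSubmodule q := fun x (hx : a x = 0) =>
      show a (q x) = 0 by rw [← mul_apply, haq.eq, mul_apply, hx, map_zero]
    have hqp : Commute q p := hp.commute_of_ker_mem_invtSubmodule hq.isSymmetric (hpa ▸ hq_ker_a)
    rw [ker_mul_eq_ker_mul_of_commute hpa hqb hbp, ker_mul_eq_ker_mul_of_commute hqb hpa haq,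
      hqp.eq]

end LinearMap

namespace Matrix

variable {n : Type*} [Fintype n] [DecidableEq n] {𝕜 : Type*} [RCLike 𝕜]

theorem toEuclideanLin_mul (A B : Matrix n n 𝕜) :
    toEuclideanLin (A * B) = toEuclideanLin A * toEuclideanLin B :=
  congrArg ContinuousLinearMap.toLinearMap (map_mul (toEuclideanCLM (n := n) (𝕜 := 𝕜)) A B)

theorem commute_toEuclideanLin_iff {A B : Matrix n n 𝕜} :
    Commute (toEuclideanLin A) (toEuclideanLin B) ↔ Commute A B := by
  simp only [commute_iff_eq, ← toEuclideanLin_mul, EmbeddingLike.apply_eq_iff_eq]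

theorem isSymmetricProjection_toEuclideanLin {P : Matrix n n 𝕜} (hP : P.IsHermitian)
    (hP2 : P * P = P) : (toEuclideanLin P).IsSymmetricProjection :=
  ⟨by rw [IsIdempotentElem, ← toEuclideanLin_mul, hP2], isSymmetric_toEuclideanLin_iff.mpr hP⟩

end Matrix

/-- AB and BA have the same support iff A commutes with Π_B and B commutes with Π_A. -/
theorem supp_mul_eq_supp_mul_iff_commute
    {n : Type*} [Fintype n] [DecidableEq n]
    (A B PiA PiB : Matrix n n ℂ) (hA : A.PosSemidef) (hB : B.PosSemidef)
    (hAherm : PiA.IsHermitian) (hAidem : PiA * PiA = PiA)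
    (hArange : LinearMap.range (Matrix.toEuclideanLin PiA) = msupp A)
    (hBherm : PiB.IsHermitian) (hBidem : PiB * PiB = PiB)
    (hBrange : LinearMap.range (Matrix.toEuclideanLin PiB) = msupp B) :
    msupp (A * B) = msupp (B * A) ↔ (A * PiB = PiB * A ∧ B * PiA = PiA * B) := by
  have hPA := Matrix.isSymmetricProjection_toEuclideanLin hAherm hAidem
  have hPB := Matrix.isSymmetricProjection_toEuclideanLin hBherm hBidem
  rw [msupp, msupp, Submodule.orthogonal_inj, Matrix.toEuclideanLin_mul,
    Matrix.toEuclideanLin_mul, LinearMap.ker_mul_eq_ker_mul_iff_commute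
      (Matrix.isSymmetric_toEuclideanLin_iff.mpr hA.isHermitian)
      (Matrix.isSymmetric_toEuclideanLin_iff.mpr hB.isHermitian) hPA hPB
      (hPA.ker_eq_of_range_eq hArange) (hPB.ker_eq_of_range_eq hBrange),
    Matrix.commute_toEuclideanLin_iff, Matrix.commute_toEuclideanLin_iff]
  rfl
end

section
/- For two orthogonal projections P and Q on a finite-dimensional Hilbert space, P and Q commute if and only if supp(PQP) = supp(P) ∩ supp(Q). -/
open scoped ComplexOrder

/-!
Since `p q p = (q p)† (q p)`, the kernel of `p q p` is that of `q p`, so `(ker (p q p))ᗮ` is the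
closure of the range of `(q p)† = p q`. If `p` and `q` commute, `p q` is the orthogonal projection
onto `range p ⊓ range q`. Conversely, if the range of `p q` lies in `range q` then `q p q = p q`;
the left side is self-adjoint, so `p q = (p q)† = q p`.
-/

theorem IsSelfAdjoint.commute_of_mul_mul_eq_mul {R : Type*} [Semigroup R] [StarMul R] {p q : R}
    (hp : IsSelfAdjoint p) (hq : IsSelfAdjoint q) (h : q * (p * q) = p * q) : Commute p q := by
  have h' : q * p * q = q * p := by
    simpa [hp.star_eq, hq.star_eq, mul_assoc] using congr_arg star h
  calc p * q = q * (p * q) := h.symm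
    _ = q * p := by rw [← mul_assoc, h']

namespace ContinuousLinearMap

open ContinuousLinearMap
open scoped InnerProduct

theorem IsIdempotentElem.apply_of_mem_range {R M : Type*} [Semiring R] [TopologicalSpace M]
    [AddCommMonoid M] [Module R M] {p : M →L[R] M} (hp : IsIdempotentElem p) {x : M}
    (hx : x ∈ p.range) : p x = x :=
  (LinearMap.IsIdempotentElem.mem_range_iff hp.toLinearMap).mp hx

theorem IsIdempotentElem.range_mul_of_commute {R M : Type*} [Semiring R] [TopologicalSpace M]
    [AddCommMonoid M] [Module R M] {p q : M →L[R] M} (hp : IsIdempotentElem p)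
    (hq : IsIdempotentElem q) (hpq : Commute p q) : (p * q).range = p.range ⊓ q.range := by
  refine le_antisymm (le_inf ?_ ?_) ?_
  · exact LinearMap.range_comp_le_range _ _
  · rw [hpq.eq]
    exact LinearMap.range_comp_le_range _ _
  · rintro x ⟨hxp, hxq⟩
    exact ⟨x, show p (q x) = x by rw [hq.apply_of_mem_range hxq, hp.apply_of_mem_range hxp]⟩

namespace IsStarProjection

variable {𝕜 H : Type*} [RCLike 𝕜] [NormedAddCommGroup H] [InnerProductSpace 𝕜 H]
  [CompleteSpace H] {p q : H →L[𝕜] H}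

theorem orthogonal_ker (hp : IsStarProjection p) : p.kerᗮ = p.range := by
  rw [ContinuousLinearMap.orthogonal_ker, ← star_eq_adjoint, hp.isSelfAdjoint.star_eq,
    hp.isIdempotentElem.isClosed_range.submodule_topologicalClosure_eq]

theorem ker_mul_mul (hp : IsStarProjection p) (hq : IsStarProjection q) :
    (p * q * p).ker = (q * p).ker := by
  have h : p * q * p = (q * p)† ∘L (q * p) := by
    rw [← star_eq_adjoint, star_mul, hp.isSelfAdjoint.star_eq, hq.isSelfAdjoint.star_eq,
      ← mul_def, ← mul_assoc, mul_assoc p q q, hq.isIdempotentElem.eq]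
  rw [h, ker_adjoint_comp_self]

theorem orthogonal_ker_mul_mul (hp : IsStarProjection p) (hq : IsStarProjection q) :
    (p * q * p).kerᗮ = (p * q).range.topologicalClosure := by
  rw [hp.ker_mul_mul hq, ContinuousLinearMap.orthogonal_ker, ← star_eq_adjoint, star_mul,
    hp.isSelfAdjoint.star_eq, hq.isSelfAdjoint.star_eq]

theorem commute_iff_topologicalClosure_range_mul (hp : IsStarProjection p)
    (hq : IsStarProjection q) :
    Commute p q ↔ (p * q).range.topologicalClosure = p.range ⊓ q.range := by
  refine ⟨fun hpq ↦ ?_, fun h ↦ hp.isSelfAdjoint.commute_of_mul_mul_eq_mul hq.isSelfAdjoint ?_⟩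
  · rw [(hp.mul hq hpq).isIdempotentElem.isClosed_range.submodule_topologicalClosure_eq,
      hp.isIdempotentElem.range_mul_of_commute hq.isIdempotentElem hpq]
  · have hrange : (p * q).range ≤ q.range :=
      (Submodule.le_topologicalClosure _).trans (h.trans_le inf_le_right)
    ext x
    exact hq.isIdempotentElem.apply_of_mem_range (hrange ⟨x, rfl⟩)

theorem commute_iff_orthogonal_ker_mul_mul (hp : IsStarProjection p) (hq : IsStarProjection q) :
    Commute p q ↔ (p * q * p).kerᗮ = p.kerᗮ ⊓ q.kerᗮ := by
  rw [hp.orthogonal_ker_mul_mul hq, hp.orthogonal_ker, hq.orthogonal_ker,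
    hp.commute_iff_topologicalClosure_range_mul hq]

end IsStarProjection

end ContinuousLinearMap

/-- Two orthogonal projections P and Q commute iff supp(PQP) = supp(P) ∩ supp(Q). -/
theorem proj_commute_iff_supp_inf
    {n : Type*} [Fintype n] [DecidableEq n]
    (P Q : Matrix n n ℂ)
    (hPherm : P.IsHermitian) (hPidem : P * P = P)
    (hQherm : Q.IsHermitian) (hQidem : Q * Q = Q) :
    P * Q = Q * P ↔ msupp (P * Q * P) = msupp P ⊓ msupp Q := by
  have hP : IsStarProjection P := ⟨hPidem, hPherm⟩
  have hQ : IsStarProjection Q := ⟨hQidem, hQherm⟩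
  let e := Matrix.toEuclideanCLM (n := n) (𝕜 := ℂ)
  have key :=
    ContinuousLinearMap.IsStarProjection.commute_iff_orthogonal_ker_mul_mul (hP.map e) (hQ.map e)
  rw [← map_mul, ← map_mul] at key
  rwa [← commute_iff_eq, ← commute_map_iff e.injective]
end

section
/- For positive semidefinite matrices A and B, there exists a unitary U commuting with the projection Π_A onto supp(A) such that √A·√B·U = √(√A·B·√A) if and only if B commutes with Π_A. -/
/-!
Write `S = √A`, `R = √B`, `C = √(S B S)` and `Π = Π_A`. Since `ker S = ker A = ker Π`,
we have `S Π = Π S = S`, and as `C² = S B S` also `C Π = Π C = C`.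

If `S R U = C` with `U` unitary commuting with `Π`, then `S R Π U = S R U Π = C Π = S R U`,
so `S R Π = S R`. This says `S (R Π - R) = 0`, i.e. `Π R Π = Π R`; taking adjoints, `R` and
hence `B = R²` commute with `Π`.

Conversely, `(S R)(S R)ᴴ = C Cᴴ`, and padding both `S R` and `C` by `1 - Π` preserves this,
so the padded matrices differ by a unitary; that unitary fixes `1 - Π`, hence commutes with `Π`.
-/

open scoped ComplexOrder

open Classical in
/-- The unique positive semidefinite square root of a positive semidefinite matrix
(junk value 0 otherwise). -/
noncomputable def psqrt {n : Type*} [Fintype n] [DecidableEq n] (X : Matrix n n ℂ) :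
    Matrix n n ℂ :=
  if h : X.PosSemidef then
    (h.1.eigenvectorUnitary : Matrix n n ℂ) *
      Matrix.diagonal (((↑) : ℝ → ℂ) ∘ Real.sqrt ∘ h.1.eigenvalues) *
      (star (h.1.eigenvectorUnitary : Matrix n n ℂ))
  else 0

/-- The kernel of a matrix, as a subspace of Euclidean space. -/
noncomputable def mker {n : Type*} [Fintype n] [DecidableEq n] (X : Matrix n n ℂ) :
    Submodule ℂ (EuclideanSpace ℂ n) :=
  LinearMap.ker (Matrix.toEuclideanLin X)

/-- The generalized geometric mean M(A,B) = √A · √(√(A⁺) B √(A⁺)) · √A, where Ap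
stands for the Moore–Penrose pseudoinverse A⁺ of A. -/
noncomputable def geoMean {n : Type*} [Fintype n] [DecidableEq n]
    (A Ap B : Matrix n n ℂ) : Matrix n n ℂ :=
  psqrt A * psqrt (psqrt Ap * B * psqrt Ap) * psqrt A

open scoped InnerProductSpace Matrix MatrixOrder

section Isometry

variable {𝕜 E : Type*} [RCLike 𝕜] [NormedAddCommGroup E] [InnerProductSpace 𝕜 E]
  [FiniteDimensional 𝕜 E]

theorem LinearMap.exists_linearIsometry_apply_eq {r g : E →ₗ[𝕜] E}
    (h : ∀ x, ‖r x‖ = ‖g x‖) : ∃ V : E →ₗᵢ[𝕜] E, ∀ x, V (r x) = g x := by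
  have hker : LinearMap.ker r ≤ LinearMap.ker g := fun x hx => by
    rw [LinearMap.mem_ker, ← norm_eq_zero, ← h, LinearMap.mem_ker.mp hx, norm_zero]
  let L : LinearMap.range r →ₗ[𝕜] E :=
    (LinearMap.ker r).liftQ g hker ∘ₗ r.quotKerEquivRange.symm.toLinearMap
  have hL : ∀ x, L ⟨r x, LinearMap.mem_range_self r x⟩ = g x := fun x => by
    simp [L, LinearMap.quotKerEquivRange_symm_apply_image]
  have hLnorm : ∀ y, ‖L y‖ = ‖y‖ := by
    rintro ⟨_, x, rfl⟩
    rw [hL, ← h, Submodule.coe_norm]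
  refine ⟨(⟨L, hLnorm⟩ : LinearMap.range r →ₗᵢ[𝕜] E).extend, fun x => ?_⟩
  exact (LinearIsometry.extend_apply _ ⟨r x, LinearMap.mem_range_self r x⟩).trans (hL x)

end Isometry

theorem mul_eq_self_of_forall_mul_eq_zero {R : Type*} [Ring R] {P X : R}
    (hP : IsIdempotentElem P) (h : ∀ M, P * M = 0 → X * M = 0) : X * P = X := by
  have hXQ := h (1 - P) (by rw [mul_sub, mul_one, hP.eq, sub_self])
  rwa [mul_sub, mul_one, sub_eq_zero, eq_comm] at hXQ

namespace Matrix

theorem IsHermitian.mul_eq_self_of_mul_eq_self {α n : Type*} [Fintype n] [NonUnitalSemiring α]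
    [StarRing α] {X P : Matrix n n α} (hX : X.IsHermitian) (hP : P.IsHermitian)
    (h : X * P = X) : P * X = X := by
  simpa only [conjTranspose_mul, hX.eq, hP.eq] using congrArg (·ᴴ) h

variable {𝕜 n : Type*} [RCLike 𝕜] [Fintype n] [DecidableEq n]

theorem mul_eq_zero_iff_range_le_ker {X M : Matrix n n 𝕜} :
    X * M = 0 ↔ LinearMap.range (toEuclideanLin M) ≤ LinearMap.ker (toEuclideanLin X) := by
  rw [LinearMap.range_le_ker_iff, ← toLpLin_mul_same, LinearEquiv.map_eq_zero_iff]

theorem IsHermitian.mul_eq_zero_iff_of_range_eq_orthogonal_ker {P A : Matrix n n 𝕜}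
    (hP : P.IsHermitian)
    (h : LinearMap.range (toEuclideanLin P) = (LinearMap.ker (toEuclideanLin A))ᗮ)
    (M : Matrix n n 𝕜) : P * M = 0 ↔ A * M = 0 := by
  have hker : LinearMap.ker (toEuclideanLin P) = LinearMap.ker (toEuclideanLin A) := by
    rw [← (isSymmetric_toEuclideanLin_iff.mpr hP).orthogonal_range, h,
      Submodule.orthogonal_orthogonal]
  rw [mul_eq_zero_iff_range_le_ker, mul_eq_zero_iff_range_le_ker, hker]

theorem toEuclideanLin_symm_mem_unitaryGroup
    (V : EuclideanSpace 𝕜 n →ₗᵢ[𝕜] EuclideanSpace 𝕜 n) :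
    toEuclideanLin.symm V.toLinearMap ∈ unitaryGroup n 𝕜 := by
  rw [mem_unitaryGroup_iff', star_eq_conjTranspose]
  apply toEuclideanLin.injective
  rw [toLpLin_mul_same, toEuclideanLin_conjTranspose_eq_adjoint, LinearEquiv.apply_symm_apply,
    toLpLin_one]
  refine LinearMap.ext fun x => ext_inner_right 𝕜 fun y => ?_
  rw [LinearMap.comp_apply, LinearMap.adjoint_inner_left]
  exact V.inner_map_map x y

theorem exists_mem_unitaryGroup_mul_eq_of_mul_conjTranspose_eq {X Y : Matrix n n 𝕜}
    (h : X * Xᴴ = Y * Yᴴ) : ∃ U ∈ unitaryGroup n 𝕜, X * U = Y := by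
  have hinner (Z : Matrix n n 𝕜) (v : EuclideanSpace 𝕜 n) :
      ⟪toEuclideanLin Zᴴ v, toEuclideanLin Zᴴ v⟫_𝕜 =
        ⟪v, toEuclideanLin (Z * Zᴴ) v⟫_𝕜 := by
    rw [toEuclideanLin_conjTranspose_eq_adjoint, LinearMap.adjoint_inner_left, toLpLin_mul_same,
      toEuclideanLin_conjTranspose_eq_adjoint, LinearMap.comp_apply]
  obtain ⟨V, hV⟩ := LinearMap.exists_linearIsometry_apply_eq (r := toEuclideanLin Xᴴ)
    (g := toEuclideanLin Yᴴ) fun v => by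
      rw [@norm_eq_sqrt_re_inner 𝕜, @norm_eq_sqrt_re_inner 𝕜, hinner, hinner, h]
  set M := toEuclideanLin.symm V.toLinearMap
  have hMX : M * Xᴴ = Yᴴ := by
    apply toEuclideanLin.injective
    rw [toLpLin_mul_same, LinearEquiv.apply_symm_apply]
    exact LinearMap.ext hV
  refine ⟨Mᴴ, ?_, by rw [← conjTranspose_conjTranspose Y, ← hMX, conjTranspose_mul,
    conjTranspose_conjTranspose]⟩
  rw [← star_eq_conjTranspose]
  exact Unitary.star_mem (toEuclideanLin_symm_mem_unitaryGroup V)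

theorem exists_mem_unitaryGroup_commute_mul_eq {P X Y : Matrix n n 𝕜} (hP : P.IsHermitian)
    (hPP : IsIdempotentElem P) (hPX : P * X = X) (hXP : X * P = X) (hPY : P * Y = Y)
    (hYP : Y * P = Y) (h : X * Xᴴ = Y * Yᴴ) :
    ∃ U ∈ unitaryGroup n 𝕜, Commute U P ∧ X * U = Y := by
  set Q := 1 - P
  have hQ : Qᴴ = Q := (isHermitian_one.sub hP).eq
  have hQQ : Q * Q = Q := hPP.one_sub.eq
  have hQX : Q * X = 0 := by rw [sub_mul, one_mul, hPX, sub_self]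
  have hXQ : X * Q = 0 := by rw [mul_sub, mul_one, hXP, sub_self]
  have hQY : Q * Y = 0 := by rw [sub_mul, one_mul, hPY, sub_self]
  have hYQ : Y * Q = 0 := by rw [mul_sub, mul_one, hYP, sub_self]
  have hpad (Z : Matrix n n 𝕜) (hZ : Z * Q = 0) : (Z + Q) * (Z + Q)ᴴ = Z * Zᴴ + Q := by
    have hQZ : Q * Zᴴ = 0 := by rw [← hQ, ← conjTranspose_mul, hZ, conjTranspose_zero]
    rw [conjTranspose_add, hQ, add_mul, mul_add, mul_add, hZ, hQZ, hQQ, add_zero, zero_add]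
  obtain ⟨U, hU, hXU⟩ := exists_mem_unitaryGroup_mul_eq_of_mul_conjTranspose_eq
    (X := X + Q) (Y := Y + Q) (by rw [hpad X hXQ, hpad Y hYQ, h])
  have hQU : Q * U = Q := by
    simpa only [mul_add, ← mul_assoc, hQX, hQY, hQQ, zero_add] using congrArg (Q * ·) hXU
  have hUQ : U * Q = Q :=
    calc U * Q = U * (Q * U)ᴴ := by rw [hQU, hQ]
      _ = U * star U * Q := by rw [conjTranspose_mul, hQ, star_eq_conjTranspose, mul_assoc]
      _ = Q := by rw [mem_unitaryGroup_iff.mp hU, one_mul]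
  refine ⟨U, hU, ?_, ?_⟩
  · have hcomm : U - U * P = U - P * U := by
      simpa only [Q, mul_sub, sub_mul, mul_one, one_mul] using hUQ.trans hQU.symm
    exact sub_right_injective hcomm
  · rwa [add_mul, hQU, add_left_inj] at hXU

end Matrix

section Psqrt

open Matrix

variable {n : Type*} [Fintype n] [DecidableEq n]

theorem psqrt_eq_sqrt {X : Matrix n n ℂ} (hX : X.PosSemidef) : psqrt X = CFC.sqrt X := by
  rw [psqrt, dif_pos hX, CFC.sqrt_eq_cfc, cfc_nnreal_eq_real _ X, hX.1.cfc_eq]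
  simp only [IsHermitian.cfc, Unitary.conjStarAlgAut_apply]
  congr 3
  funext i
  simp [Real.coe_sqrt, Real.coe_toNNReal', max_eq_left (hX.eigenvalues_nonneg i)]

theorem psqrt_posSemidef {X : Matrix n n ℂ} (hX : X.PosSemidef) : (psqrt X).PosSemidef := by
  rw [psqrt_eq_sqrt hX]
  exact nonneg_iff_posSemidef.mp (CFC.sqrt_nonneg X)

theorem psqrt_mul_self {X : Matrix n n ℂ} (hX : X.PosSemidef) : psqrt X * psqrt X = X := by
  rw [psqrt_eq_sqrt hX]
  exact CFC.sqrt_mul_sqrt_self X hX.nonneg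

theorem psqrt_mul_eq_zero_iff {X : Matrix n n ℂ} (hX : X.PosSemidef) (M : Matrix n n ℂ) :
    psqrt X * M = 0 ↔ X * M = 0 := by
  rw [← conjTranspose_mul_self_mul_eq_zero, (psqrt_posSemidef hX).isHermitian.eq,
    psqrt_mul_self hX]

theorem commute_psqrt_iff {X P : Matrix n n ℂ} (hX : X.PosSemidef) :
    Commute (psqrt X) P ↔ Commute X P := by
  refine ⟨fun h => psqrt_mul_self hX ▸ h.mul_left h, fun h => ?_⟩
  rw [psqrt_eq_sqrt hX, CFC.sqrt_eq_cfc]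
  exact h.cfc_nnreal _

theorem mul_psqrt_mul_eq_self_iff_commute {S P B : Matrix n n ℂ} (hB : B.PosSemidef)
    (hP : P.IsHermitian) (hSP : S * P = S) (hker : ∀ M, S * M = 0 → P * M = 0) :
    S * psqrt B * P = S * psqrt B ↔ Commute B P := by
  rw [← commute_psqrt_iff hB]
  have hR := (psqrt_posSemidef hB).isHermitian
  refine ⟨fun h => ?_, fun h => by rw [mul_assoc, h.eq, ← mul_assoc, hSP]⟩
  have hPRP : P * psqrt B * P = P * psqrt B := by
    have hPR : P * (psqrt B * P - psqrt B) = 0 :=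
      hker _ (by rw [mul_sub, ← mul_assoc, h, sub_self])
    rwa [mul_sub, sub_eq_zero, ← mul_assoc] at hPR
  have hRP : P * psqrt B * P = psqrt B * P := by
    simpa only [conjTranspose_mul, hR.eq, hP.eq, mul_assoc] using congrArg conjTranspose hPRP
  exact hRP.symm.trans hPRP

end Psqrt

/-- There is a unitary U commuting with the support projection of A such that
√A √B U = √(√A B √A) iff B commutes with the support projection of A. -/
theorem exists_unitary_commuting_polar_iff
    {n : Type*} [Fintype n] [DecidableEq n]
    (A B PiA : Matrix n n ℂ) (hA : A.PosSemidef) (hB : B.PosSemidef)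
    (hherm : PiA.IsHermitian) (hidem : PiA * PiA = PiA)
    (hrange : LinearMap.range (Matrix.toEuclideanLin PiA) = msupp A) :
    (∃ U : Matrix n n ℂ, U ∈ Matrix.unitaryGroup n ℂ ∧ U * PiA = PiA * U ∧
      psqrt A * psqrt B * U = psqrt (psqrt A * B * psqrt A)) ↔ B * PiA = PiA * B := by
  set S := psqrt A
  set C := psqrt (S * B * S)
  have hS : S.IsHermitian := (psqrt_posSemidef hA).isHermitian
  have hSBS : (S * B * S).PosSemidef := by simpa only [hS.eq] using hB.mul_mul_conjTranspose_same S
  have hC : C.IsHermitian := (psqrt_posSemidef hSBS).isHermitian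
  have hker (M : Matrix n n ℂ) : PiA * M = 0 ↔ S * M = 0 :=
    (hherm.mul_eq_zero_iff_of_range_eq_orthogonal_ker hrange M).trans
      (psqrt_mul_eq_zero_iff hA M).symm
  have hSP : S * PiA = S := mul_eq_self_of_forall_mul_eq_zero hidem fun M => (hker M).1
  have hCP : C * PiA = C := mul_eq_self_of_forall_mul_eq_zero hidem fun M hM => by
    rw [psqrt_mul_eq_zero_iff hSBS, mul_assoc, (hker M).1 hM, mul_zero]
  have hTT : (S * psqrt B) * (S * psqrt B)ᴴ = C * Cᴴ := by
    rw [Matrix.conjTranspose_mul, (psqrt_posSemidef hB).isHermitian.eq, hS.eq, hC.eq,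
      psqrt_mul_self hSBS, mul_assoc, ← mul_assoc (psqrt B), psqrt_mul_self hB, mul_assoc]
  refine Iff.trans ?_ (mul_psqrt_mul_eq_self_iff_commute hB hherm hSP fun M => (hker M).2)
  constructor
  · rintro ⟨U, hU, hUP, hTU⟩
    have hU' : U * star U = 1 := Matrix.mem_unitaryGroup_iff.mp hU
    have hTPU : S * psqrt B * PiA * U = S * psqrt B * U := by
      rw [mul_assoc _ PiA, ← hUP, ← mul_assoc, hTU, hCP]
    simpa only [mul_assoc, hU', mul_one] using congrArg (· * star U) hTPU
  · exact fun hTP => Matrix.exists_mem_unitaryGroup_commute_mul_eq hherm hidem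
      (by rw [← mul_assoc, hS.mul_eq_self_of_mul_eq_self hherm hSP]) hTP
      (hC.mul_eq_self_of_mul_eq_self hherm hCP) hCP hTT
end

section
/- The classical fidelity is monotone under coarse graining: if p, q, p', q' are finitely supported probability distributions with p_j = Σ_k S_{jk} p'_k and q_j = Σ_k S_{jk} q'_k for a stochastic matrix S (S_{jk} ≥ 0, Σ_j S_{jk} = 1), then (Σ_j √(p_j q_j))² ≥ (Σ_k √(p'_k q'_k))². -/
/-!
Each output weight `√(p_j q_j)` dominates the `S j ·`-weighted sum of the input weights
`√(p'_k q'_k)` by Cauchy–Schwarz applied to the vectors `(√(S_jk p'_k))_k` and `(√(S_jk q'_k))_k`.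
Summing over `j`, the column sums `∑_j S_jk = 1` recover `∑_k √(p'_k q'_k)` on the left.
-/

open Finset Real

theorem Real.sum_mul_sqrt_mul_le_sqrt_mul_sum {ι : Type*} (s : Finset ι) {w f g : ι → ℝ}
    (hw : ∀ i, 0 ≤ w i) (hf : ∀ i, 0 ≤ f i) (hg : ∀ i, 0 ≤ g i) :
    ∑ i ∈ s, w i * √(f i * g i) ≤ √((∑ i ∈ s, w i * f i) * ∑ i ∈ s, w i * g i) := by
  calc ∑ i ∈ s, w i * √(f i * g i)
      = ∑ i ∈ s, √(w i * f i) * √(w i * g i) := by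
        refine sum_congr rfl fun i _ => ?_
        rw [sqrt_mul (hw i), sqrt_mul (hw i), sqrt_mul (hf i), mul_mul_mul_comm, mul_self_sqrt (hw i)]
    _ ≤ √(∑ i ∈ s, w i * f i) * √(∑ i ∈ s, w i * g i) :=
        sum_sqrt_mul_sqrt_le s (fun i => mul_nonneg (hw i) (hf i)) fun i => mul_nonneg (hw i) (hg i)
    _ = √((∑ i ∈ s, w i * f i) * ∑ i ∈ s, w i * g i) :=
        (sqrt_mul (sum_nonneg fun i _ => mul_nonneg (hw i) (hf i)) _).symm

theorem sum_sqrt_mul_le_sum_sqrt_mul_of_stochastic {J K : Type*} [Fintype J] [Fintype K]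
    {p' q' : K → ℝ} {S : J → K → ℝ}
    (hp' : ∀ k, 0 ≤ p' k) (hq' : ∀ k, 0 ≤ q' k)
    (hS : ∀ j k, 0 ≤ S j k) (hScol : ∀ k, ∑ j, S j k = 1) :
    ∑ k, √(p' k * q' k) ≤ ∑ j, √((∑ k, S j k * p' k) * ∑ k, S j k * q' k) :=
  calc ∑ k, √(p' k * q' k)
      = ∑ j, ∑ k, S j k * √(p' k * q' k) := by
        simp only [sum_comm (γ := J), ← sum_mul, hScol, one_mul]
    _ ≤ ∑ j, √((∑ k, S j k * p' k) * ∑ k, S j k * q' k) :=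
        sum_le_sum fun j _ => sum_mul_sqrt_mul_le_sqrt_mul_sum univ (hS j) hp' hq'

theorem classical_fidelity_coarse_graining_general
    {J K : Type*} [Fintype J] [Fintype K]
    (p q : J → ℝ) (p' q' : K → ℝ) (S : J → K → ℝ)
    (hp' : ∀ k, 0 ≤ p' k) (hq' : ∀ k, 0 ≤ q' k)
    (hS : ∀ j k, 0 ≤ S j k) (hScol : ∀ k, ∑ j, S j k = 1)
    (hp : ∀ j, p j = ∑ k, S j k * p' k) (hq : ∀ j, q j = ∑ k, S j k * q' k) :
    (∑ k, Real.sqrt (p' k * q' k)) ^ 2 ≤ (∑ j, Real.sqrt (p j * q j)) ^ 2 := by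
  have hmono := sum_sqrt_mul_le_sum_sqrt_mul_of_stochastic hp' hq' hS hScol
  simp only [← hp, ← hq] at hmono
  exact pow_le_pow_left₀ (sum_nonneg fun k _ => sqrt_nonneg _) hmono 2

/-- The classical fidelity is monotone under coarse graining by a stochastic matrix. -/
theorem classical_fidelity_coarse_graining
    {J K : Type*} [Fintype J] [Fintype K]
    (p q : J → ℝ) (p' q' : K → ℝ) (S : J → K → ℝ)
    (hp' : ∀ k, 0 ≤ p' k) (hq' : ∀ k, 0 ≤ q' k)
    (hp'sum : ∑ k, p' k = 1) (hq'sum : ∑ k, q' k = 1)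
    (hS : ∀ j k, 0 ≤ S j k) (hScol : ∀ k, ∑ j, S j k = 1)
    (hp : ∀ j, p j = ∑ k, S j k * p' k) (hq : ∀ j, q j = ∑ k, S j k * q' k) :
    (∑ k, Real.sqrt (p' k * q' k)) ^ 2 ≤ (∑ j, Real.sqrt (p j * q j)) ^ 2 :=
  classical_fidelity_coarse_graining_general p q p' q' S hp' hq' hS hScol hp hq
end
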